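/- For integers 0 ≤ k ≤ n, define the Entringer number E_{n,k} as the number of down-up alternating permutations of {1,…,n+1} whose first entry is k+1, where a permutation (w_1,…,w_m) of {1,…,m} is down-up alternating if w_1 > w_2 < w_3 > w_4 < ⋯. Then for every n ≥ 2 and every 1 ≤ k ≤ n−1, the sequence is log-concave: E_{n,k}² ≥ E_{n,k−1} · E_{n,k+1}. -/
import Mathlib


/-- A sequence `w` is down-up alternating if `w 0 > w 1 < w 2 > w 3 < ⋯`. -/
def DownUp {m : ℕ} (w : Fin m → Fin m) : Prop :=
  ∀ i : ℕ, ∀ h : i + 1 < m,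
    if i % 2 = 0 then w ⟨i + 1, h⟩ < w ⟨i, Nat.lt_of_succ_lt h⟩
    else w ⟨i, Nat.lt_of_succ_lt h⟩ < w ⟨i + 1, h⟩

/-- The Entringer number `E_{n,k}`: the number of down-up alternating permutations of
`{1,…,n+1}` whose first entry is `k+1` (here a permutation of `{1,…,n+1}` is encoded as a
bijection `w : Fin (n+1) → Fin (n+1)`, the value `w j` encoding the entry `(w j) + 1`). -/
noncomputable def entringer (n k : ℕ) : ℕ :=
  Nat.card {w : Fin (n + 1) → Fin (n + 1) //
    Function.Bijective w ∧ DownUp w ∧ ((w 0 : ℕ) = k)}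

namespace Stmt17Aux

variable {m : ℕ}

lemma vne {x y : Fin m} (h : x ≠ y) : (x : ℕ) ≠ (y : ℕ) := fun hv => h (Fin.ext hv)

/-- Swapping two consecutive values preserves strict order, except on the pair itself. -/
lemma swap_lt {c d x y : Fin m} (hcd : (c : ℕ) + 1 = (d : ℕ)) (hxy : x < y)
    (hne : ¬(x = c ∧ y = d)) : Equiv.swap c d x < Equiv.swap c d y := by
  rw [Fin.lt_def] at hxy
  by_cases hxc : x = c
  · subst hxc
    have hyd : y ≠ d := fun hy => hne ⟨rfl, hy⟩
    have hyc : y ≠ x := by rw [Ne, Fin.ext_iff]; omega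
    rw [Equiv.swap_apply_left, Equiv.swap_apply_of_ne_of_ne hyc hyd]
    have := vne hyd
    rw [Fin.lt_def]; omega
  · by_cases hxd : x = d
    · subst hxd
      have hyd : y ≠ x := by rw [Ne, Fin.ext_iff]; omega
      have hyc : y ≠ c := by rw [Ne, Fin.ext_iff]; omega
      rw [Equiv.swap_apply_right, Equiv.swap_apply_of_ne_of_ne hyc hyd]
      rw [Fin.lt_def]; omega
    · rw [Equiv.swap_apply_of_ne_of_ne hxc hxd]
      have hxc' := vne hxc
      have hxd' := vne hxd
      by_cases hyc : y = c
      · subst hyc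
        rw [Equiv.swap_apply_left, Fin.lt_def]; omega
      · by_cases hyd : y = d
        · subst hyd
          rw [Equiv.swap_apply_right, Fin.lt_def]
          have := vne hxc
          omega
        · rw [Equiv.swap_apply_of_ne_of_ne hyc hyd, Fin.lt_def]; omega

/-- Generic transport of the down-up property along a map preserving the relevant
comparisons. -/
lemma downup_comp {w g : Fin m → Fin m} (hw : DownUp w)
    (hg : ∀ (i : ℕ) (h : i + 1 < m) (x y : Fin m),
      ((x = w ⟨i + 1, h⟩ ∧ y = w ⟨i, Nat.lt_of_succ_lt h⟩) ∨
        (x = w ⟨i, Nat.lt_of_succ_lt h⟩ ∧ y = w ⟨i + 1, h⟩)) → x < y → g x < g y) :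
    DownUp (fun j => g (w j)) := by
  intro i h
  have hwi := hw i h
  by_cases hp : i % 2 = 0
  · rw [if_pos hp] at hwi ⊢
    exact hg i h _ _ (Or.inl ⟨rfl, rfl⟩) hwi
  · rw [if_neg hp] at hwi ⊢
    exact hg i h _ _ (Or.inr ⟨rfl, rfl⟩) hwi

/-- If `w 0 = c` then postcomposing a down-up `w` with `swap c (c+1)` is down-up. -/
lemma downup_swap_first {c d : Fin m} {w : Fin m → Fin m} (hcd : (c : ℕ) + 1 = (d : ℕ))
    (hinj : Function.Injective w) (hw : DownUp w)
    (h0 : ∀ h : 0 < m, w ⟨0, h⟩ = c) :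
    DownUp (fun j => Equiv.swap c d (w j)) := by
  refine downup_comp hw ?_
  intro i h x y hxy hlt
  refine swap_lt hcd hlt ?_
  rintro ⟨hxc, hyd⟩
  have h0' := h0 (by omega)
  rcases hxy with ⟨hx, hy⟩ | ⟨hx, hy⟩
  · have : (⟨i + 1, h⟩ : Fin m) = ⟨0, by omega⟩ := hinj (by rw [← hx, hxc, h0'])
    simp [Fin.ext_iff] at this
  · have hi : (⟨i, Nat.lt_of_succ_lt h⟩ : Fin m) = ⟨0, by omega⟩ :=
      hinj (by rw [← hx, hxc, h0'])
    have hi0 : i = 0 := by simpa [Fin.ext_iff] using hi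
    subst hi0
    have hww := hw 0 h
    rw [if_pos rfl] at hww
    rw [hx, hy] at hlt
    exact absurd hlt (not_lt.mpr hww.le)

/-- If `w 0 = c+1` and `w 1 ≠ c` then postcomposing a down-up `w` with `swap c (c+1)`
is down-up. -/
lemma downup_swap_second {c d : Fin m} {w : Fin m → Fin m} (hcd : (c : ℕ) + 1 = (d : ℕ))
    (hinj : Function.Injective w) (hw : DownUp w) (hm : 1 < m)
    (h0 : w ⟨0, Nat.lt_of_succ_lt hm⟩ = d) (h1 : w ⟨1, hm⟩ ≠ c) :
    DownUp (fun j => Equiv.swap c d (w j)) := by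
  refine downup_comp hw ?_
  intro i h x y hxy hlt
  refine swap_lt hcd hlt ?_
  rintro ⟨hxc, hyd⟩
  rcases hxy with ⟨hx, hy⟩ | ⟨hx, hy⟩
  · -- y = w ⟨i⟩ = d = w 0, so i = 0, and x = w ⟨1⟩ = c contradicting h1
    have hi : (⟨i, Nat.lt_of_succ_lt h⟩ : Fin m) = ⟨0, Nat.lt_of_succ_lt hm⟩ :=
      hinj (by rw [← hy, hyd, h0])
    have hi0 : i = 0 := by simpa [Fin.ext_iff] using hi
    subst hi0
    rw [hx] at hxc
    exact h1 hxc
  · have hi : (⟨i + 1, h⟩ : Fin m) = ⟨0, Nat.lt_of_succ_lt hm⟩ :=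
      hinj (by rw [← hy, hyd, h0])
    simp [Fin.ext_iff] at hi

lemma psi_lt {a b c x y : Fin m} (hab : (a : ℕ) + 1 = (b : ℕ)) (hbc : (b : ℕ) + 1 = (c : ℕ))
    (hxb : x ≠ b) (hxc : x ≠ c) (hyb : y ≠ b) (hyc : y ≠ c) (hxy : x < y) :
    Equiv.swap b c (Equiv.swap a b x) < Equiv.swap b c (Equiv.swap a b y) := by
  rw [Fin.lt_def] at hxy
  have hxb' := vne hxb; have hxc' := vne hxc
  have hyb' := vne hyb; have hyc' := vne hyc
  by_cases hxa : x = a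
  · have hxa' : (x : ℕ) = (a : ℕ) := by rw [hxa]
    have hya : y ≠ a := by rw [Ne, Fin.ext_iff]; omega
    have hya' := vne hya
    rw [hxa, Equiv.swap_apply_left, Equiv.swap_apply_left,
      Equiv.swap_apply_of_ne_of_ne hya hyb, Equiv.swap_apply_of_ne_of_ne hyb hyc, Fin.lt_def]
    omega
  · by_cases hya : y = a
    · have hya' : (y : ℕ) = (a : ℕ) := by rw [hya]
      have hxa' := vne hxa
      rw [hya, Equiv.swap_apply_left, Equiv.swap_apply_left,
        Equiv.swap_apply_of_ne_of_ne hxa hxb, Equiv.swap_apply_of_ne_of_ne hxb hxc, Fin.lt_def]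
      omega
    · rw [Equiv.swap_apply_of_ne_of_ne hxa hxb, Equiv.swap_apply_of_ne_of_ne hxb hxc,
        Equiv.swap_apply_of_ne_of_ne hya hyb, Equiv.swap_apply_of_ne_of_ne hyb hyc, Fin.lt_def]
      exact hxy

/-- If `w 0 = b+1` and `w 1 = b` then applying the 3-cycle `b+1 ↦ b ↦ b-1 ↦ b+1` to the
values of a down-up `w` gives a down-up sequence. -/
lemma downup_psi {a b c : Fin m} {w : Fin m → Fin m}
    (hab : (a : ℕ) + 1 = (b : ℕ)) (hbc : (b : ℕ) + 1 = (c : ℕ))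
    (hinj : Function.Injective w) (hw : DownUp w) (hm : 2 < m)
    (h0 : w ⟨0, Nat.lt_of_succ_lt (Nat.lt_of_succ_lt hm)⟩ = c)
    (h1 : w ⟨1, Nat.lt_of_succ_lt hm⟩ = b) :
    DownUp (fun j => Equiv.swap b c (Equiv.swap a b (w j))) := by
  have hab' : a ≠ b := by rw [Ne, Fin.ext_iff]; omega
  have hac : a ≠ c := by rw [Ne, Fin.ext_iff]; omega
  have hbc' : b ≠ c := by rw [Ne, Fin.ext_iff]; omega
  have e1 : Equiv.swap a b b = a := Equiv.swap_apply_right _ _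
  have e2 : Equiv.swap b c a = a := Equiv.swap_apply_of_ne_of_ne hab' hac
  have e3 : Equiv.swap a b c = c := Equiv.swap_apply_of_ne_of_ne (Ne.symm hac) (Ne.symm hbc')
  have e4 : Equiv.swap b c c = b := Equiv.swap_apply_right _ _
  refine downup_comp (w := w) (g := fun x => Equiv.swap b c (Equiv.swap a b x)) hw ?_
  intro i h x y hxy hlt
  match i, h with
  | 0, h =>
    have h1' : w ⟨0 + 1, h⟩ = b := h1
    have h0' : w ⟨0, Nat.lt_of_succ_lt h⟩ = c := h0
    rcases hxy with ⟨hx, hy⟩ | ⟨hx, hy⟩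
    · show Equiv.swap b c (Equiv.swap a b x) < Equiv.swap b c (Equiv.swap a b y)
      rw [hx, hy, h1', h0', e1, e3, e2, e4, Fin.lt_def]
      omega
    · rw [hx, h0', hy, h1', Fin.lt_def] at hlt
      omega
  | 1, h =>
    have h1' : w ⟨1, Nat.lt_of_succ_lt h⟩ = b := h1
    have hww := hw 1 h
    rw [if_neg (by decide)] at hww
    rw [h1'] at hww
    have hne2 : w ⟨1 + 1, h⟩ ≠ b := by
      rw [← h1]; intro hh
      have := hinj hh
      simp [Fin.ext_iff] at this
    have hne2' : w ⟨1 + 1, h⟩ ≠ c := by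
      rw [← h0]; intro hh
      have := hinj hh
      simp [Fin.ext_iff] at this
    rcases hxy with ⟨hx, hy⟩ | ⟨hx, hy⟩
    · rw [hx, hy, h1'] at hlt
      exact absurd hlt (not_lt.mpr hww.le)
    · have hne2a : w ⟨1 + 1, h⟩ ≠ a := by
        rw [Ne, Fin.ext_iff]
        rw [Fin.lt_def] at hww
        omega
      show Equiv.swap b c (Equiv.swap a b x) < Equiv.swap b c (Equiv.swap a b y)
      rw [hx, hy, h1', e1, e2, Equiv.swap_apply_of_ne_of_ne hne2a hne2,
        Equiv.swap_apply_of_ne_of_ne hne2 hne2', Fin.lt_def]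
      rw [Fin.lt_def] at hww
      omega
  | (j + 2), h =>
    have hne : ∀ (p : ℕ) (hp : p < m), 2 ≤ p → w ⟨p, hp⟩ ≠ b ∧ w ⟨p, hp⟩ ≠ c := by
      intro p hp hp2
      constructor
      · rw [← h1]; intro hh
        have := hinj hh
        simp [Fin.ext_iff] at this
        omega
      · rw [← h0]; intro hh
        have := hinj hh
        simp [Fin.ext_iff] at this
        omega
    have hx2 := hne (j + 2) (Nat.lt_of_succ_lt h) (by omega)
    have hy2 := hne (j + 2 + 1) h (by omega)
    rcases hxy with ⟨hx, hy⟩ | ⟨hx, hy⟩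
    · rw [hx] at hlt ⊢
      rw [hy] at hlt ⊢
      exact psi_lt hab hbc hy2.1 hy2.2 hx2.1 hx2.2 hlt
    · rw [hx] at hlt ⊢
      rw [hy] at hlt ⊢
      exact psi_lt hab hbc hx2.1 hx2.2 hy2.1 hy2.2 hlt

lemma card_le_of_perm (e : Equiv.Perm (Fin m)) {P Q : (Fin m → Fin m) → Prop}
    (h : ∀ w, P w → Q (fun j => e (w j))) :
    Nat.card {w // P w} ≤ Nat.card {w // Q w} := by
  apply Nat.card_le_card_of_injective
    (fun x : {w // P w} => (⟨fun j => e (x.1 j), h _ x.2⟩ : {w // Q w}))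
  intro x y hxy
  apply Subtype.ext; funext j
  exact e.injective (congrFun (congrArg Subtype.val hxy) j)

lemma card_split {α : Type*} [Finite α] (P Q : α → Prop) :
    Nat.card {x // P x} = Nat.card {x // P x ∧ Q x} + Nat.card {x // P x ∧ ¬ Q x} := by
  classical
  rw [← Nat.card_sum]
  exact Nat.card_congr ((Equiv.sumCompl fun y : {x // P x} => Q y.val).symm.trans
    (Equiv.sumCongr (Equiv.subtypeSubtypeEquivSubtypeInter P Q)
      (Equiv.subtypeSubtypeEquivSubtypeInter P fun x => ¬ Q x)))

end Stmt17Aux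

set_option maxHeartbeats 1000000 in
open Stmt17Aux in
theorem stmt17 (n k : ℕ) (hn : 2 ≤ n) (hk1 : 1 ≤ k) (hk : k ≤ n - 1) :
    entringer n (k - 1) * entringer n (k + 1) ≤ entringer n k ^ 2 := by
  have hk' : k + 1 ≤ n := by omega
  have f0 : ∀ h : 0 < n + 1, (⟨0, h⟩ : Fin (n + 1)) = 0 := fun _ => rfl
  have f1 : ∀ h : 1 < n + 1, (⟨1, h⟩ : Fin (n + 1)) = 1 := by
    intro h; ext; simp [Fin.val_one', Nat.mod_eq_of_lt h]
  set K1 : Fin (n + 1) := ⟨k - 1, by omega⟩ with hK1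
  set K : Fin (n + 1) := ⟨k, by omega⟩ with hK
  set K2 : Fin (n + 1) := ⟨k + 1, by omega⟩ with hK2
  have hv1 : (K1 : ℕ) = k - 1 := by rw [hK1]
  have hv : (K : ℕ) = k := by rw [hK]
  have hv2 : (K2 : ℕ) = k + 1 := by rw [hK2]
  have hcd1 : (K1 : ℕ) + 1 = (K : ℕ) := by rw [hv1, hv]; omega
  have hcd2 : (K : ℕ) + 1 = (K2 : ℕ) := by rw [hv, hv2]
  -- from down-up, `w 1 < w 0`
  have first_lt : ∀ w : Fin (n + 1) → Fin (n + 1), DownUp w → w 1 < w 0 := by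
    intro w hw
    have h01 : (0 : ℕ) + 1 < n + 1 := by omega
    have f1' : (⟨0 + 1, h01⟩ : Fin (n + 1)) = 1 := f1 h01
    have := hw 0 h01
    rw [if_pos rfl] at this
    rwa [f1', f0 (Nat.lt_of_succ_lt h01)] at this
  have hhm1 : (1 : ℕ) < n + 1 := by omega
  have hhm2 : (2 : ℕ) < n + 1 := by omega
  -- implication 1 : E_{k-1} entries map to (start k, second ≠ k-1) entries under swap(K1,K)
  have impl1 : ∀ w : Fin (n + 1) → Fin (n + 1),
      (Function.Bijective w ∧ DownUp w ∧ ((w 0 : ℕ) = k - 1)) →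
      ((Function.Bijective (fun j => Equiv.swap K1 K (w j)) ∧
          DownUp (fun j => Equiv.swap K1 K (w j)) ∧
          (((fun j => Equiv.swap K1 K (w j)) 0 : ℕ) = k)) ∧
        ¬ (((fun j => Equiv.swap K1 K (w j)) 1 : ℕ) = k - 1)) := by
    rintro w ⟨hbij, hdu, h0⟩
    have hw0 : w 0 = K1 := Fin.ext h0
    have hlt01 : w 1 < K1 := hw0 ▸ first_lt w hdu
    have hlt01' : (w 1 : ℕ) < k - 1 := by rw [Fin.lt_def, hv1] at hlt01; exact hlt01
    have h1K1 : w 1 ≠ K1 := ne_of_lt hlt01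
    have h1K : w 1 ≠ K := by rw [Ne, Fin.ext_iff, hv]; omega
    refine ⟨⟨(Equiv.swap K1 K).bijective.comp hbij, ?_, ?_⟩, ?_⟩
    · exact downup_swap_first hcd1 hbij.injective hdu (fun hh => hw0)
    · show (Equiv.swap K1 K (w 0) : ℕ) = k
      rw [hw0, Equiv.swap_apply_left, hv]
    · show ¬ ((Equiv.swap K1 K (w 1) : ℕ) = k - 1)
      rw [Equiv.swap_apply_of_ne_of_ne h1K1 h1K]
      omega
  -- implication 2 : converse direction
  have impl2 : ∀ w : Fin (n + 1) → Fin (n + 1),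
      ((Function.Bijective w ∧ DownUp w ∧ ((w 0 : ℕ) = k)) ∧ ¬ ((w 1 : ℕ) = k - 1)) →
      (Function.Bijective (fun j => Equiv.swap K1 K (w j)) ∧
        DownUp (fun j => Equiv.swap K1 K (w j)) ∧
        (((fun j => Equiv.swap K1 K (w j)) 0 : ℕ) = k - 1)) := by
    rintro w ⟨⟨hbij, hdu, h0⟩, h1⟩
    have hw0 : w 0 = K := Fin.ext h0
    have hne1 : w 1 ≠ K1 := by rw [Ne, Fin.ext_iff, hv1]; exact h1
    have harg0 : w ⟨0, Nat.lt_of_succ_lt hhm1⟩ = K := hw0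
    have harg1 : w ⟨1, hhm1⟩ ≠ K1 := by rw [f1 hhm1]; exact hne1
    refine ⟨(Equiv.swap K1 K).bijective.comp hbij, ?_, ?_⟩
    · exact downup_swap_second hcd1 hbij.injective hdu hhm1 harg0 harg1
    · show (Equiv.swap K1 K (w 0) : ℕ) = k - 1
      rw [hw0, Equiv.swap_apply_right, hv1]
  -- implication 3 : E_k entries map to (start k+1, second ≠ k) entries under swap(K,K2)
  have impl3 : ∀ w : Fin (n + 1) → Fin (n + 1),
      (Function.Bijective w ∧ DownUp w ∧ ((w 0 : ℕ) = k)) →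
      ((Function.Bijective (fun j => Equiv.swap K K2 (w j)) ∧
          DownUp (fun j => Equiv.swap K K2 (w j)) ∧
          (((fun j => Equiv.swap K K2 (w j)) 0 : ℕ) = k + 1)) ∧
        ¬ (((fun j => Equiv.swap K K2 (w j)) 1 : ℕ) = k)) := by
    rintro w ⟨hbij, hdu, h0⟩
    have hw0 : w 0 = K := Fin.ext h0
    have hlt01 : w 1 < K := hw0 ▸ first_lt w hdu
    have hlt01' : (w 1 : ℕ) < k := by rw [Fin.lt_def, hv] at hlt01; exact hlt01
    have h1K : w 1 ≠ K := ne_of_lt hlt01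
    have h1K2 : w 1 ≠ K2 := by rw [Ne, Fin.ext_iff, hv2]; omega
    refine ⟨⟨(Equiv.swap K K2).bijective.comp hbij, ?_, ?_⟩, ?_⟩
    · exact downup_swap_first hcd2 hbij.injective hdu (fun hh => hw0)
    · show (Equiv.swap K K2 (w 0) : ℕ) = k + 1
      rw [hw0, Equiv.swap_apply_left, hv2]
    · show ¬ ((Equiv.swap K K2 (w 1) : ℕ) = k)
      rw [Equiv.swap_apply_of_ne_of_ne h1K h1K2]
      omega
  -- implication 4 : converse direction
  have impl4 : ∀ w : Fin (n + 1) → Fin (n + 1),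
      ((Function.Bijective w ∧ DownUp w ∧ ((w 0 : ℕ) = k + 1)) ∧ ¬ ((w 1 : ℕ) = k)) →
      (Function.Bijective (fun j => Equiv.swap K K2 (w j)) ∧
        DownUp (fun j => Equiv.swap K K2 (w j)) ∧
        (((fun j => Equiv.swap K K2 (w j)) 0 : ℕ) = k)) := by
    rintro w ⟨⟨hbij, hdu, h0⟩, h1⟩
    have hw0 : w 0 = K2 := Fin.ext h0
    have hne1 : w 1 ≠ K := by rw [Ne, Fin.ext_iff, hv]; exact h1
    have harg0 : w ⟨0, Nat.lt_of_succ_lt hhm1⟩ = K2 := hw0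
    have harg1 : w ⟨1, hhm1⟩ ≠ K := by rw [f1 hhm1]; exact hne1
    refine ⟨(Equiv.swap K K2).bijective.comp hbij, ?_, ?_⟩
    · exact downup_swap_second hcd2 hbij.injective hdu hhm1 harg0 harg1
    · show (Equiv.swap K K2 (w 0) : ℕ) = k
      rw [hw0, Equiv.swap_apply_right, hv]
  -- implication 5 : the injection giving B ≤ A, via the 3-cycle
  have impl5 : ∀ w : Fin (n + 1) → Fin (n + 1),
      ((Function.Bijective w ∧ DownUp w ∧ ((w 0 : ℕ) = k + 1)) ∧ ((w 1 : ℕ) = k)) →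
      ((Function.Bijective (fun j => Equiv.swap K K2 (Equiv.swap K1 K (w j))) ∧
          DownUp (fun j => Equiv.swap K K2 (Equiv.swap K1 K (w j))) ∧
          (((fun j => Equiv.swap K K2 (Equiv.swap K1 K (w j))) 0 : ℕ) = k)) ∧
        (((fun j => Equiv.swap K K2 (Equiv.swap K1 K (w j))) 1 : ℕ) = k - 1)) := by
    rintro w ⟨⟨hbij, hdu, h0⟩, h1⟩
    have hw0 : w 0 = K2 := Fin.ext h0
    have hw1 : w 1 = K := Fin.ext h1
    have hK2K1 : K2 ≠ K1 := by rw [Ne, Fin.ext_iff, hv2, hv1]; omega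
    have hK2K : K2 ≠ K := by rw [Ne, Fin.ext_iff, hv2, hv]; omega
    have hK1K : K1 ≠ K := by rw [Ne, Fin.ext_iff, hv1, hv]; omega
    have hK1K2 : K1 ≠ K2 := by rw [Ne, Fin.ext_iff, hv1, hv2]; omega
    have harg0 : w ⟨0, Nat.lt_of_succ_lt (Nat.lt_of_succ_lt hhm2)⟩ = K2 := hw0
    have harg1 : w ⟨1, Nat.lt_of_succ_lt hhm2⟩ = K := by
      rw [f1 (Nat.lt_of_succ_lt hhm2)]; exact hw1
    have hbij2 : Function.Bijective (fun j => Equiv.swap K K2 (Equiv.swap K1 K (w j))) :=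
      (Equiv.swap K K2).bijective.comp ((Equiv.swap K1 K).bijective.comp hbij)
    refine ⟨⟨hbij2, ?_, ?_⟩, ?_⟩
    · exact downup_psi hcd1 hcd2 hbij.injective hdu hhm2 harg0 harg1
    · show (Equiv.swap K K2 (Equiv.swap K1 K (w 0)) : ℕ) = k
      rw [hw0, Equiv.swap_apply_of_ne_of_ne hK2K1 hK2K, Equiv.swap_apply_right, hv]
    · show (Equiv.swap K K2 (Equiv.swap K1 K (w 1)) : ℕ) = k - 1
      rw [hw1, Equiv.swap_apply_right, Equiv.swap_apply_of_ne_of_ne hK1K hK1K2, hv1]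
  -- counting
  have hsplitk : entringer n k
      = Nat.card {w : Fin (n + 1) → Fin (n + 1) //
          (Function.Bijective w ∧ DownUp w ∧ ((w 0 : ℕ) = k)) ∧ ((w 1 : ℕ) = k - 1)}
      + Nat.card {w : Fin (n + 1) → Fin (n + 1) //
          (Function.Bijective w ∧ DownUp w ∧ ((w 0 : ℕ) = k)) ∧ ¬ ((w 1 : ℕ) = k - 1)} :=
    card_split _ _
  have hsplitk2 : entringer n (k + 1)
      = Nat.card {w : Fin (n + 1) → Fin (n + 1) //
          (Function.Bijective w ∧ DownUp w ∧ ((w 0 : ℕ) = k + 1)) ∧ ((w 1 : ℕ) = k)}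
      + Nat.card {w : Fin (n + 1) → Fin (n + 1) //
          (Function.Bijective w ∧ DownUp w ∧ ((w 0 : ℕ) = k + 1)) ∧ ¬ ((w 1 : ℕ) = k)} :=
    card_split _ _
  have hEm : entringer n (k - 1)
      = Nat.card {w : Fin (n + 1) → Fin (n + 1) //
          (Function.Bijective w ∧ DownUp w ∧ ((w 0 : ℕ) = k)) ∧ ¬ ((w 1 : ℕ) = k - 1)} :=
    le_antisymm (card_le_of_perm (Equiv.swap K1 K) impl1)
      (card_le_of_perm (Equiv.swap K1 K) impl2)
  have hBnot : Nat.card {w : Fin (n + 1) → Fin (n + 1) //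
          (Function.Bijective w ∧ DownUp w ∧ ((w 0 : ℕ) = k + 1)) ∧ ¬ ((w 1 : ℕ) = k)}
      = entringer n k :=
    le_antisymm (card_le_of_perm (Equiv.swap K K2) impl4)
      (card_le_of_perm (Equiv.swap K K2) impl3)
  have hBA : Nat.card {w : Fin (n + 1) → Fin (n + 1) //
          (Function.Bijective w ∧ DownUp w ∧ ((w 0 : ℕ) = k + 1)) ∧ ((w 1 : ℕ) = k)}
      ≤ Nat.card {w : Fin (n + 1) → Fin (n + 1) //
          (Function.Bijective w ∧ DownUp w ∧ ((w 0 : ℕ) = k)) ∧ ((w 1 : ℕ) = k - 1)} :=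
    card_le_of_perm ((Equiv.swap K1 K).trans (Equiv.swap K K2)) impl5
  set A := Nat.card {w : Fin (n + 1) → Fin (n + 1) //
      (Function.Bijective w ∧ DownUp w ∧ ((w 0 : ℕ) = k)) ∧ ((w 1 : ℕ) = k - 1)} with hA
  set Anot := Nat.card {w : Fin (n + 1) → Fin (n + 1) //
      (Function.Bijective w ∧ DownUp w ∧ ((w 0 : ℕ) = k)) ∧ ¬ ((w 1 : ℕ) = k - 1)} with hAnot
  set B := Nat.card {w : Fin (n + 1) → Fin (n + 1) //
      (Function.Bijective w ∧ DownUp w ∧ ((w 0 : ℕ) = k + 1)) ∧ ((w 1 : ℕ) = k)} with hB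
  rw [hEm, hsplitk2, hBnot, hsplitk]
  nlinarith [Nat.mul_le_mul_left Anot hBA, sq_nonneg A]
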